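/- arXiv:q-alg/9602026 — 3 statements merged into one kernel-verified Lean document; each statement's English description precedes it below -/
import Mathlib

section
/- Let A and B be associative unital algebras over an algebraically closed field k, and let M be a finite-dimensional simple module over A ⊗ B. Then M is isomorphic as an (A ⊗ B)-module to M₁ ⊗ M₂, where M₁ is a simple A-module and M₂ is a simple B-module. -/
open scoped TensorProduct

/-- The canonical `A ⊗[k] B`-module structure on `M ⊗[k] N`, where `A` acts on the
first factor and `B` on the second: `(a ⊗ b) • (m ⊗ n) = (a • m) ⊗ (b • n)`. -/
noncomputable def tensorAction (k A B M N : Type) [CommRing k] [Ring A] [Ring B]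
    [Algebra k A] [Algebra k B] [AddCommGroup M] [Module k M] [AddCommGroup N] [Module k N]
    [Module A M] [IsScalarTower k A M] [Module B N] [IsScalarTower k B N] :
    Module (A ⊗[k] B) (M ⊗[k] N) :=
  Module.compHom _ (((Module.endTensorEndAlgHom (R := k) (S := k) (A := k)).comp
    (Algebra.TensorProduct.map (Algebra.lsmul k k M) (Algebra.lsmul k k N))).toRingHom)

/-- A bundled module over the `k`-algebra `A`. -/
structure ModuleOver (k A : Type) [CommRing k] [Ring A] [Algebra k A] where
  M : Type
  [acg : AddCommGroup M]
  [modk : Module k M]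
  [modA : Module A M]
  [tower : IsScalarTower k A M]

attribute [instance] ModuleOver.acg ModuleOver.modk ModuleOver.modA ModuleOver.tower

open Module

section Aux
variable {k A M₁ N : Type} [Field k] [IsAlgClosed k] [Ring A] [Algebra k A]
  [AddCommGroup M₁] [Module k M₁] [Module A M₁] [IsScalarTower k A M₁]
  [AddCommGroup N] [Module k N] [Module A N] [IsScalarTower k A N]

/-- Schur over an algebraically closed field: endomorphisms are scalars. -/
lemma aux_end (hs : IsSimpleModule A M₁) [FiniteDimensional k M₁] (f : M₁ →ₗ[A] M₁) :
    ∃ c : k, f = c • LinearMap.id := by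
  haveI := hs
  haveI : Nontrivial M₁ := IsSimpleModule.nontrivial A M₁
  obtain ⟨μ, hμ⟩ := Module.End.exists_eigenvalue (f.restrictScalars k : Module.End k M₁)
  obtain ⟨v, hv⟩ := hμ.exists_hasEigenvector
  refine ⟨μ, ?_⟩
  have hker : LinearMap.ker (f - μ • LinearMap.id) = ⊤ := by
    refine (eq_bot_or_eq_top _).resolve_left fun h => ?_
    have hvmem : v ∈ LinearMap.ker (f - μ • LinearMap.id) := by
      simp only [LinearMap.mem_ker, LinearMap.sub_apply, LinearMap.smul_apply, LinearMap.id_apply]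
      rw [sub_eq_zero]
      exact hv.apply_eq_smul
    rw [h] at hvmem
    exact hv.2 (by simpa using hvmem)
  have h0 : f - μ • LinearMap.id = 0 := by
    ext x
    have : x ∈ LinearMap.ker (f - μ • LinearMap.id) := hker ▸ Submodule.mem_top
    simpa using this
  exact sub_eq_zero.mp h0

/-- Hom space between simple modules has dimension at most 1. -/
lemma aux_hom (hs : IsSimpleModule A M₁) (hn : IsSimpleModule A N) [FiniteDimensional k M₁] :
    FiniteDimensional k (M₁ →ₗ[A] N) ∧ Module.finrank k (M₁ →ₗ[A] N) ≤ 1 := by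
  haveI := hs; haveI := hn
  by_cases h0 : ∀ f : M₁ →ₗ[A] N, f = 0
  · haveI : Subsingleton (M₁ →ₗ[A] N) := ⟨fun f g => (h0 f).trans (h0 g).symm⟩
    refine ⟨Module.finite_def.mpr ((Subsingleton.elim (⊤ : Submodule k (M₁ →ₗ[A] N)) ⊥) ▸ Submodule.fg_bot), ?_⟩
    rw [Module.finrank_zero_of_subsingleton]
    omega
  · push_neg at h0
    obtain ⟨f, hf⟩ := h0
    have hker : LinearMap.ker f = ⊥ := by
      refine (eq_bot_or_eq_top _).resolve_right fun h => hf ?_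
      ext x
      simpa using (h ▸ Submodule.mem_top : x ∈ LinearMap.ker f)
    have hrange : LinearMap.range f = ⊤ := by
      refine (eq_bot_or_eq_top _).resolve_left fun h => hf ?_
      ext x
      have : f x ∈ LinearMap.range f := LinearMap.mem_range_self f x
      rw [h] at this
      simpa using this
    let e : M₁ ≃ₗ[A] N := LinearEquiv.ofBijective f
      ⟨LinearMap.ker_eq_bot.mp hker, LinearMap.range_eq_top.mp hrange⟩
    have hspan : ∀ g : M₁ →ₗ[A] N, ∃ c : k, g = c • f := by
      intro g
      obtain ⟨c, hc⟩ := aux_end (k := k) hs ((e.symm : N →ₗ[A] M₁).comp g)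
      refine ⟨c, ?_⟩
      ext x
      have hx := congrArg (fun h : M₁ →ₗ[A] M₁ => e (h x)) hc
      simp only [LinearMap.comp_apply, LinearEquiv.coe_coe, LinearEquiv.apply_symm_apply,
        LinearMap.smul_apply, LinearMap.id_apply, map_smul] at hx
      exact hx.trans (f.map_smul_of_tower c x)
    have htop : (⊤ : Submodule k (M₁ →ₗ[A] N)) = Submodule.span k {f} := by
      refine le_antisymm (fun g _ => ?_) le_top
      obtain ⟨c, hc⟩ := hspan g
      exact Submodule.mem_span_singleton.mpr ⟨c, hc.symm⟩
    haveI hfd : FiniteDimensional k (M₁ →ₗ[A] N) :=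
      Module.finite_def.mpr (htop ▸ Submodule.fg_span_singleton f)
    refine ⟨hfd, ?_⟩
    rw [← finrank_top k (M₁ →ₗ[A] N), htop, finrank_span_singleton hf]

end Aux

section Aux2
variable {k A M₁ N N' : Type} [Field k] [Ring A] [Algebra k A]
  [AddCommGroup M₁] [Module k M₁] [Module A M₁] [IsScalarTower k A M₁]
  [AddCommGroup N] [Module k N] [Module A N] [IsScalarTower k A N]
  [AddCommGroup N'] [Module k N'] [Module A N'] [IsScalarTower k A N']

/-- Post-composition with an `A`-linear equivalence, as a `k`-linear equivalence of hom spaces. -/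
def homCongrRight (e : N ≃ₗ[A] N') : (M₁ →ₗ[A] N) ≃ₗ[k] (M₁ →ₗ[A] N') where
  toFun f := e.toLinearMap.comp f
  invFun g := e.symm.toLinearMap.comp g
  left_inv f := by ext x; simp
  right_inv g := by ext x; simp
  map_add' f g := by ext x; simp
  map_smul' c f := by ext x; exact (e : N →ₗ[A] N').map_smul_of_tower c (f x)

/-- If a linear map has full range, the codomain dimension is at most the domain dimension. -/
lemma aux_surj_finrank {k P Q : Type} [Field k] [AddCommGroup P] [AddCommGroup Q]
    [Module k P] [Module k Q] [FiniteDimensional k P] (f : P →ₗ[k] Q)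
    (h : LinearMap.range f = ⊤) : Module.finrank k Q ≤ Module.finrank k P := by
  have h1 := LinearMap.finrank_range_add_finrank_ker f
  rw [h, finrank_top] at h1
  omega

end Aux2

set_option maxHeartbeats 2000000 in
theorem main_aux
    (k A B : Type) [Field k] [IsAlgClosed k] [Ring A] [Ring B] [Algebra k A] [Algebra k B]
    (M : Type) [AddCommGroup M] [Module k M] [Module (A ⊗[k] B) M]
    [IsScalarTower k (A ⊗[k] B) M] [FiniteDimensional k M]
    [Module A M] [IsScalarTower k A M]
    (hA : ∀ (a : A) (m : M), a • m = (a ⊗ₜ[k] (1 : B)) • m)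
    (hM : IsSimpleModule (A ⊗[k] B) M) :
    ∃ (P : ModuleOver k A) (Q : ModuleOver k B),
      IsSimpleModule A P.M ∧ IsSimpleModule B Q.M ∧
      letI := tensorAction k A B P.M Q.M
      Nonempty (M ≃ₗ[A ⊗[k] B] P.M ⊗[k] Q.M) := by
  haveI := hM
  haveI : Nontrivial M := IsSimpleModule.nontrivial (A ⊗[k] B) M
  -- finite dimensionality of all A-submodules
  have fdW : ∀ W : Submodule A M, FiniteDimensional k ↥W := fun W =>
    FiniteDimensional.of_injective ((W.subtype).restrictScalars k) W.injective_subtype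
  haveI := fdW
  -- restrictScalars facts
  have hrs_lt : ∀ {W W' : Submodule A M}, W < W' →
      Submodule.restrictScalars k W < Submodule.restrictScalars k W' := by
    intro W W' h
    refine lt_of_le_of_ne (fun x hx => h.le hx) fun hEq => h.ne ?_
    exact Submodule.restrictScalars_injective k A M hEq
  have hfr_lt : ∀ {W W' : Submodule A M}, W < W' → finrank k ↥W < finrank k ↥W' := by
    intro W W' h
    exact Submodule.finrank_lt_finrank_of_lt (hrs_lt h)
  -- Step A : a minimal-dimension nonzero A-submodule
  set 𝒮 : Set ℕ := {n | ∃ W : Submodule A M, W ≠ ⊥ ∧ finrank k ↥W = n} with h𝒮def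
  have h𝒮 : 𝒮.Nonempty := by
    refine ⟨finrank k ↥(⊤ : Submodule A M), ⊤, ?_, rfl⟩
    intro h
    obtain ⟨x, hx⟩ := exists_ne (0 : M)
    exact hx (by simpa using (h ▸ Submodule.mem_top : x ∈ (⊥ : Submodule A M)))
  obtain ⟨W₁, hW₁ne, hW₁d⟩ := Nat.sInf_mem h𝒮
  set d := sInf 𝒮 with hddef
  have hd_le : ∀ W : Submodule A M, W ≠ ⊥ → d ≤ finrank k ↥W := fun W h =>
    Nat.sInf_le ⟨W, h, rfl⟩
  have hW₁atom : IsAtom W₁ := by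
    refine ⟨hW₁ne, fun W hWlt => ?_⟩
    by_contra hne
    have h1 : d ≤ finrank k ↥W := hd_le W hne
    have h2 : finrank k ↥W < finrank k ↥W₁ := hfr_lt hWlt
    omega
  haveI hsimple₁ : IsSimpleModule A ↥W₁ := isSimpleModule_iff_isAtom.mpr hW₁atom
  haveI : Nontrivial ↥W₁ := IsSimpleModule.nontrivial A ↥W₁
  have hd_pos : 0 < d := by
    rw [← hW₁d]
    exact finrank_pos
  -- Step B : the sup of all atoms is ⊤
  have hmap : ∀ (φ : M →ₗ[A] M) (N : Submodule A M), IsAtom N →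
      Submodule.map φ N = ⊥ ∨ IsAtom (Submodule.map φ N) := by
    intro φ N hN
    haveI : IsSimpleModule A ↥N := isSimpleModule_iff_isAtom.mpr hN
    set ψ : ↥N →ₗ[A] M := φ.comp N.subtype with hψdef
    have hrange : LinearMap.range ψ = Submodule.map φ N := by
      rw [hψdef, LinearMap.range_comp, Submodule.range_subtype]
    rcases eq_or_ne (Submodule.map φ N) ⊥ with h | h
    · exact Or.inl h
    refine Or.inr ?_
    have hker : LinearMap.ker ψ = ⊥ := by
      refine (eq_bot_or_eq_top _).resolve_right fun h' => h ?_
      rw [← hrange, LinearMap.range_eq_bot.mpr (LinearMap.ker_eq_top.mp h')]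
    refine isSimpleModule_iff_isAtom.mp ?_
    exact IsSimpleModule.congr
      (((LinearEquiv.ofEq _ _ hrange.symm).trans
        (LinearEquiv.ofInjective ψ (LinearMap.ker_eq_bot.mp hker)).symm))
  -- the A-linear action of 1 ⊗ b
  let phi : B → (M →ₗ[A] M) := fun b =>
    { toFun := fun m => ((1:A) ⊗ₜ[k] b) • m
      map_add' := fun m m' => smul_add _ m m'
      map_smul' := fun a m => by
        simp only [RingHom.id_apply]
        rw [hA, hA, ← mul_smul, ← mul_smul, Algebra.TensorProduct.tmul_mul_tmul,
          Algebra.TensorProduct.tmul_mul_tmul, one_mul, mul_one, one_mul, mul_one] }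
  have phi_apply : ∀ (b : B) (m : M), phi b m = ((1:A) ⊗ₜ[k] b) • m := fun _ _ => rfl
  set T : Submodule A M := sSup {N : Submodule A M | IsAtom N} with hTdef
  have hW₁T : W₁ ≤ T := le_sSup hW₁atom
  have hTatom : ∀ N : Submodule A M, IsAtom N → N ≤ T := fun N hN => le_sSup hN
  have hstable : ∀ (r : A ⊗[k] B) (x : M), x ∈ T → r • x ∈ T := by
    have hper_atom : ∀ (N : Submodule A M), IsAtom N → ∀ x ∈ N, ∀ r : A ⊗[k] B, r • x ∈ T := by
      intro N hN x hx r
      induction r using TensorProduct.induction_on with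
      | zero => simpa using T.zero_mem
      | tmul a b =>
        have h1 : (a ⊗ₜ[k] b) • x = a • (phi b x) := by
          rw [phi_apply, hA, ← mul_smul, Algebra.TensorProduct.tmul_mul_tmul, mul_one, one_mul]
        rw [h1]
        have h2 : phi b x ∈ Submodule.map (phi b) N := Submodule.mem_map_of_mem hx
        have h3 : Submodule.map (phi b) N ≤ T := by
          rcases hmap (phi b) N hN with h | h
          · rw [h]; exact bot_le
          · exact hTatom _ h
        exact T.smul_mem a (h3 h2)
      | add r s hr hs => rw [add_smul]; exact T.add_mem hr hs
    intro r x hx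
    rw [hTdef, sSup_eq_iSup'] at hx
    refine Submodule.iSup_induction _ (motive := fun y => r • y ∈ T) hx ?_ ?_ ?_
    · rintro ⟨N, hN⟩ y hy
      exact hper_atom N hN y hy r
    · simpa using T.zero_mem
    · intro y z hy hz
      rw [smul_add]
      exact T.add_mem hy hz
  have hTtop : T = ⊤ := by
    set T' : Submodule (A ⊗[k] B) M :=
      { carrier := T
        add_mem' := fun h h' => T.add_mem h h'
        zero_mem' := T.zero_mem
        smul_mem' := fun r x h => hstable r x h } with hT'def
    have hT' : T' = ⊤ := by
      refine (eq_bot_or_eq_top T').resolve_left fun h => ?_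
      obtain ⟨x, hxW, hx0⟩ := Submodule.exists_mem_ne_zero_of_ne_bot hW₁ne
      have : x ∈ T' := hW₁T hxW
      rw [h] at this
      exact hx0 (by simpa using this)
    rw [eq_top_iff]
    intro x _
    have : x ∈ T' := hT' ▸ Submodule.mem_top
    exact this
  -- Step C : dimension bound  d * dim Hom_A(W₁, M) ≤ dim M
  have hcommon : ∀ W : Submodule A M, W = ⊤ →
      (FiniteDimensional k (↥W₁ →ₗ[A] ↥W) ∧ d * finrank k (↥W₁ →ₗ[A] ↥W) ≤ finrank k ↥W) →
      FiniteDimensional k (↥W₁ →ₗ[A] M) ∧ d * finrank k (↥W₁ →ₗ[A] M) ≤ finrank k M := by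
    intro W hW hHd
    obtain ⟨hfd, hbound⟩ := hHd
    let e : ↥W ≃ₗ[A] M := (LinearEquiv.ofEq W ⊤ hW).trans Submodule.topEquiv
    let eH : (↥W₁ →ₗ[A] ↥W) ≃ₗ[k] (↥W₁ →ₗ[A] M) := homCongrRight e
    haveI : FiniteDimensional k (↥W₁ →ₗ[A] M) := Module.Finite.equiv eH
    refine ⟨this, ?_⟩
    have h1 : finrank k (↥W₁ →ₗ[A] M) = finrank k (↥W₁ →ₗ[A] ↥W) := eH.symm.finrank_eq
    have h2 : finrank k ↥W = finrank k M := (e.restrictScalars k).finrank_eq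
    rw [h1, ← h2]
    exact hbound
  have key : ∀ c : ℕ, ∀ W : Submodule A M,
      finrank k M ≤ finrank k ↥W + c →
      (FiniteDimensional k (↥W₁ →ₗ[A] ↥W) ∧ d * finrank k (↥W₁ →ₗ[A] ↥W) ≤ finrank k ↥W) →
      FiniteDimensional k (↥W₁ →ₗ[A] M) ∧ d * finrank k (↥W₁ →ₗ[A] M) ≤ finrank k M := by
    intro c
    induction c with
    | zero =>
      intro W hle hHd
      refine hcommon W ?_ hHd
      by_contra hW
      have h1 : finrank k ↥W < finrank k ↥(⊤ : Submodule A M) := hfr_lt (lt_top_iff_ne_top.mpr hW)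
      have h2 : finrank k ↥(⊤ : Submodule A M) ≤ finrank k M :=
        Submodule.finrank_le (Submodule.restrictScalars k (⊤ : Submodule A M))
      omega
    | succ c ih =>
      intro W hle hHd
      by_cases hW : W = ⊤
      · exact hcommon W hW hHd
      obtain ⟨hfd, hbound⟩ := hHd
      have hex : ∃ N : Submodule A M, IsAtom N ∧ ¬ N ≤ W := by
        by_contra hall
        push_neg at hall
        exact hW (top_unique (hTtop ▸ sSup_le hall))
      obtain ⟨N, hNatom, hnle⟩ := hex
      haveI hsimpleN : IsSimpleModule A ↥N := isSimpleModule_iff_isAtom.mpr hNatom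
      obtain ⟨hfdN, hboundN⟩ := aux_hom (k := k) hsimple₁ hsimpleN
      haveI := hfdN
      have hdisj : W ⊓ N = ⊥ := by
        refine hNatom.2 _ (lt_of_le_of_ne inf_le_right fun h => hnle ?_)
        rw [← h]; exact inf_le_left
      set W' := W ⊔ N with hW'def
      have hinj : Function.Injective ((W.subtype).coprod (N.subtype)) := by
        rw [← LinearMap.ker_eq_bot]
        refine (Submodule.eq_bot_iff _).mpr ?_
        rintro ⟨x, y⟩ hxy
        simp only [LinearMap.mem_ker, LinearMap.coprod_apply, Submodule.coe_subtype] at hxy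
        have hxmem : (x : M) ∈ W ⊓ N := by
          refine ⟨x.2, ?_⟩
          rw [eq_neg_of_add_eq_zero_left hxy]
          exact N.neg_mem y.2
        rw [hdisj] at hxmem
        have hx0 : (x : M) = 0 := by simpa using hxmem
        have hy0 : (y : M) = 0 := by rw [hx0, zero_add] at hxy; exact hxy
        exact Prod.ext (Subtype.ext hx0) (Subtype.ext hy0)
      let eWN : (↥W × ↥N) ≃ₗ[A] ↥W' :=
        (LinearEquiv.ofInjective _ hinj).trans
          (LinearEquiv.ofEq _ _ (Submodule.sup_eq_range W N).symm)
      let eH : ((↥W₁ →ₗ[A] ↥W) × (↥W₁ →ₗ[A] ↥N)) ≃ₗ[k] (↥W₁ →ₗ[A] ↥W') :=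
        (LinearMap.prodEquiv k).trans (homCongrRight eWN)
      haveI := hfd
      haveI hfdW' : FiniteDimensional k (↥W₁ →ₗ[A] ↥W') := Module.Finite.equiv eH
      have hfrH : finrank k (↥W₁ →ₗ[A] ↥W')
          = finrank k (↥W₁ →ₗ[A] ↥W) + finrank k (↥W₁ →ₗ[A] ↥N) := by
        rw [← eH.finrank_eq, Module.finrank_prod]
      have hfrW' : finrank k ↥W' = finrank k ↥W + finrank k ↥N := by
        rw [← (eWN.restrictScalars k).finrank_eq, Module.finrank_prod]
      have hfrNd : d ≤ finrank k ↥N := hd_le N hNatom.1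
      have hWltW' : finrank k ↥W < finrank k ↥W' := hfr_lt (left_lt_sup.mpr hnle)
      refine ih W' (by omega) ⟨hfdW', ?_⟩
      have hdN : d * finrank k (↥W₁ →ₗ[A] ↥N) ≤ d := by
        calc d * finrank k (↥W₁ →ₗ[A] ↥N) ≤ d * 1 := Nat.mul_le_mul_left d hboundN
        _ = d := Nat.mul_one d
      rw [hfrH, hfrW', Nat.mul_add]
      omega
  have hBase : FiniteDimensional k (↥W₁ →ₗ[A] ↥(⊥ : Submodule A M)) ∧
      d * finrank k (↥W₁ →ₗ[A] ↥(⊥ : Submodule A M)) ≤ finrank k ↥(⊥ : Submodule A M) := by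
    haveI : Subsingleton (↥W₁ →ₗ[A] ↥(⊥ : Submodule A M)) :=
      ⟨fun f g => by ext x⟩
    haveI : Subsingleton (Submodule k (↥W₁ →ₗ[A] ↥(⊥ : Submodule A M))) :=
      Submodule.subsingleton_iff k |>.mpr inferInstance
    refine ⟨Module.finite_def.mpr
      ((Subsingleton.elim (⊤ : Submodule k (↥W₁ →ₗ[A] ↥(⊥ : Submodule A M))) ⊥) ▸
        Submodule.fg_bot), ?_⟩
    have h0 : finrank k (↥W₁ →ₗ[A] ↥(⊥ : Submodule A M)) = 0 :=
      Module.finrank_zero_of_subsingleton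
    rw [h0, Nat.mul_zero]
    exact Nat.zero_le _
  obtain ⟨hfdM₂, hM₂bound⟩ := key (finrank k M) ⊥ (Nat.le_add_left _ _) hBase
  haveI := hfdM₂
  -- Step D : B-module structure on Hom_A(W₁, M)
  let ρ : B →+* Module.End k (↥W₁ →ₗ[A] M) :=
    { toFun := fun b =>
        { toFun := fun f => (phi b).comp f
          map_add' := fun f g => by ext x; simp
          map_smul' := fun c f => by
            ext x
            simp only [LinearMap.comp_apply, LinearMap.smul_apply, RingHom.id_apply]
            exact (phi b).map_smul_of_tower c (f x) }
      map_one' := by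
        ext f x
        show phi 1 (f x) = f x
        rw [phi_apply, ← Algebra.TensorProduct.one_def, one_smul]
      map_mul' := fun b₁ b₂ => by
        ext f x
        show phi (b₁ * b₂) (f x) = phi b₁ (phi b₂ (f x))
        rw [phi_apply, phi_apply, phi_apply, ← mul_smul, Algebra.TensorProduct.tmul_mul_tmul,
          one_mul]
      map_zero' := by
        ext f x
        show phi 0 (f x) = 0
        rw [phi_apply, TensorProduct.tmul_zero, zero_smul]
      map_add' := fun b₁ b₂ => by
        ext f x
        show phi (b₁ + b₂) (f x) = phi b₁ (f x) + phi b₂ (f x)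
        rw [phi_apply, phi_apply, phi_apply, TensorProduct.tmul_add, add_smul] }
  letI modB : Module B (↥W₁ →ₗ[A] M) := Module.compHom _ ρ
  have hBsmul : ∀ (b : B) (f : ↥W₁ →ₗ[A] M) (x : ↥W₁),
      (b • f) x = ((1:A) ⊗ₜ[k] b) • f x := fun b f x => rfl
  haveI towerB : IsScalarTower k B (↥W₁ →ₗ[A] M) := ⟨fun c b f => by
    ext x
    show ((1:A) ⊗ₜ[k] (c • b)) • f x = c • (((1:A) ⊗ₜ[k] b) • f x)
    rw [TensorProduct.tmul_smul, smul_assoc]⟩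
  -- Step E : the evaluation map and the isomorphism
  let bil : ↥W₁ →ₗ[k] (↥W₁ →ₗ[A] M) →ₗ[k] M :=
    { toFun := fun m =>
        { toFun := fun f => f m
          map_add' := fun f g => rfl
          map_smul' := fun c f => rfl }
      map_add' := fun m m' => by ext f; exact f.map_add m m'
      map_smul' := fun c m => by ext f; exact f.map_smul_of_tower c m }
  let evk : (↥W₁ ⊗[k] (↥W₁ →ₗ[A] M)) →ₗ[k] M := TensorProduct.lift bil
  letI instT : Module (A ⊗[k] B) (↥W₁ ⊗[k] (↥W₁ →ₗ[A] M)) :=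
    tensorAction k A B ↥W₁ (↥W₁ →ₗ[A] M)
  have hTsmul : ∀ (a : A) (b : B) (m : ↥W₁) (f : ↥W₁ →ₗ[A] M),
      (a ⊗ₜ[k] b) • (m ⊗ₜ[k] f) = (a • m) ⊗ₜ[k] (b • f) := fun a b m f => rfl
  let evR : (↥W₁ ⊗[k] (↥W₁ →ₗ[A] M)) →ₗ[A ⊗[k] B] M :=
    { toFun := evk
      map_add' := evk.map_add
      map_smul' := by
        intro r x
        simp only [RingHom.id_apply]
        induction r using TensorProduct.induction_on with
        | zero => rw [zero_smul, zero_smul, map_zero]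
        | tmul a b =>
          induction x using TensorProduct.induction_on with
          | zero => rw [smul_zero, map_zero, smul_zero]
          | tmul m f =>
            rw [hTsmul]
            calc evk ((a • m) ⊗ₜ[k] (b • f)) = (b • f) (a • m) := rfl
            _ = ((1:A) ⊗ₜ[k] b) • f (a • m) := hBsmul b f (a • m)
            _ = ((1:A) ⊗ₜ[k] b) • (a • f m) := by rw [f.map_smul]
            _ = ((1:A) ⊗ₜ[k] b) • ((a ⊗ₜ[k] (1:B)) • f m) := by rw [← hA]
            _ = (((1:A) ⊗ₜ[k] b) * (a ⊗ₜ[k] (1:B))) • f m := (mul_smul ((1:A) ⊗ₜ[k] b) (a ⊗ₜ[k] (1:B)) (f m)).symm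
            _ = (a ⊗ₜ[k] b) • f m := by
                rw [Algebra.TensorProduct.tmul_mul_tmul, one_mul, mul_one]
            _ = (a ⊗ₜ[k] b) • evk (m ⊗ₜ[k] f) := rfl
          | add x y hx hy => rw [smul_add, map_add, hx, hy, map_add, smul_add]
        | add r s hr hs => rw [add_smul, add_smul, map_add, hr, hs] }
  have hrange : LinearMap.range evR = ⊤ := by
    refine (eq_bot_or_eq_top _).resolve_left fun h => ?_
    obtain ⟨x, hxW, hx0⟩ := Submodule.exists_mem_ne_zero_of_ne_bot hW₁ne
    have hmem : evR ((⟨x, hxW⟩ : ↥W₁) ⊗ₜ[k] W₁.subtype) ∈ LinearMap.range evR :=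
      LinearMap.mem_range_self _ _
    rw [h] at hmem
    exact hx0 hmem
  have hsurj : Function.Surjective evR := LinearMap.range_eq_top.mp hrange
  haveI : FiniteDimensional k (↥W₁ ⊗[k] (↥W₁ →ₗ[A] M)) := inferInstance
  have hinjk : Function.Injective evk := by
    rw [← LinearMap.ker_eq_bot]
    have hsurjk : Function.Surjective evk := hsurj
    have h1 := LinearMap.finrank_range_add_finrank_ker evk
    have h2 : finrank k ↥(LinearMap.range evk) = finrank k M := by
      rw [LinearMap.range_eq_top.mpr hsurjk]
      exact finrank_top k M
    have hfrle : finrank k (↥W₁ ⊗[k] (↥W₁ →ₗ[A] M)) ≤ finrank k M := by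
      rw [Module.finrank_tensorProduct, hW₁d]
      exact hM₂bound
    have h3 : finrank k ↥(LinearMap.ker evk) = 0 := by omega
    exact Submodule.finrank_eq_zero.mp h3
  have hinj : Function.Injective evR := fun x y hxy => hinjk hxy
  let e : (↥W₁ ⊗[k] (↥W₁ →ₗ[A] M)) ≃ₗ[A ⊗[k] B] M :=
    LinearEquiv.ofBijective evR ⟨hinj, hsurj⟩
  -- Step F : simplicity of the B-module Hom_A(W₁, M)
  haveI hsimpleTensor : IsSimpleModule (A ⊗[k] B) (↥W₁ ⊗[k] (↥W₁ →ₗ[A] M)) :=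
    IsSimpleModule.congr e
  have hsub_ne : (W₁.subtype : ↥W₁ →ₗ[A] M) ≠ 0 := by
    obtain ⟨x, hxW, hx0⟩ := Submodule.exists_mem_ne_zero_of_ne_bot hW₁ne
    intro h
    exact hx0 (by simpa using congrArg (fun g : ↥W₁ →ₗ[A] M => g ⟨x, hxW⟩) h)
  haveI hsimpleM₂ : IsSimpleModule B (↥W₁ →ₗ[A] M) := by
    have hbt : (⊥ : Submodule B (↥W₁ →ₗ[A] M)) ≠ ⊤ := by
      intro h
      have : (W₁.subtype : ↥W₁ →ₗ[A] M) ∈ (⊥ : Submodule B (↥W₁ →ₗ[A] M)) :=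
        h.symm ▸ Submodule.mem_top
      exact hsub_ne (by simpa using this)
    haveI : Nontrivial (Submodule B (↥W₁ →ₗ[A] M)) := ⟨⟨⊥, ⊤, hbt⟩⟩
    refine { eq_bot_or_eq_top := fun V => ?_ }
    by_cases hVbot : V = ⊥
    · exact Or.inl hVbot
    refine Or.inr ?_
    by_contra hVtop
    haveI : FiniteDimensional k ↥V :=
      FiniteDimensional.of_injective ((V.subtype).restrictScalars k) V.injective_subtype
    let j : (↥W₁ ⊗[k] ↥V) →ₗ[k] (↥W₁ ⊗[k] (↥W₁ →ₗ[A] M)) :=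
      LinearMap.lTensor ↥W₁ ((V.subtype).restrictScalars k)
    have hjt : ∀ (m : ↥W₁) (v : ↥V), j (m ⊗ₜ[k] v) = m ⊗ₜ[k] (v : ↥W₁ →ₗ[A] M) :=
      fun m v => rfl
    have hstab : ∀ (r : A ⊗[k] B) (z : ↥W₁ ⊗[k] (↥W₁ →ₗ[A] M)),
        z ∈ LinearMap.range j → r • z ∈ LinearMap.range j := by
      intro r
      induction r using TensorProduct.induction_on with
      | zero => intro z hz; rw [zero_smul]; exact Submodule.zero_mem _
      | tmul a b =>
        intro z hz
        obtain ⟨y, rfl⟩ := hz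
        induction y using TensorProduct.induction_on with
        | zero => rw [map_zero, smul_zero]; exact Submodule.zero_mem _
        | tmul m v =>
          refine LinearMap.mem_range.mpr
            ⟨(a • m) ⊗ₜ[k] ⟨b • (v : ↥W₁ →ₗ[A] M), V.smul_mem b v.2⟩, ?_⟩
          rw [hjt, hjt, hTsmul]
        | add y₁ y₂ h₁ h₂ =>
          rw [map_add, smul_add]
          exact Submodule.add_mem _ h₁ h₂
      | add r s hr hs =>
        intro z hz
        rw [add_smul]
        exact Submodule.add_mem _ (hr z hz) (hs z hz)
    let Z' : Submodule (A ⊗[k] B) (↥W₁ ⊗[k] (↥W₁ →ₗ[A] M)) :=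
      { carrier := LinearMap.range j
        add_mem' := fun h h' => Submodule.add_mem _ h h'
        zero_mem' := Submodule.zero_mem _
        smul_mem' := fun r z h => hstab r z h }
    rcases eq_bot_or_eq_top Z' with hz | hz
    · obtain ⟨v, hvV, hv0⟩ := Submodule.exists_mem_ne_zero_of_ne_bot hVbot
      obtain ⟨x, hx⟩ : ∃ x, v x ≠ 0 := by
        by_contra hall
        push_neg at hall
        exact hv0 (LinearMap.ext fun x => hall x)
      have hmem : (x ⊗ₜ[k] v : ↥W₁ ⊗[k] (↥W₁ →ₗ[A] M)) ∈ Z' := by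
        have hmem' : (x ⊗ₜ[k] v : ↥W₁ ⊗[k] (↥W₁ →ₗ[A] M)) ∈ LinearMap.range j :=
          LinearMap.mem_range.mpr ⟨x ⊗ₜ[k] (⟨v, hvV⟩ : ↥V), hjt _ _⟩
        exact hmem'
      rw [hz] at hmem
      have h0 : (x ⊗ₜ[k] v : ↥W₁ ⊗[k] (↥W₁ →ₗ[A] M)) = 0 := by simpa using hmem
      have h1 := congrArg evk h0
      rw [map_zero] at h1
      exact hx h1
    · have hZtop : LinearMap.range j = ⊤ := by
        rw [eq_top_iff]
        intro z _
        exact (hz ▸ Submodule.mem_top : z ∈ Z')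
      have hle1 : finrank k (↥W₁ ⊗[k] (↥W₁ →ₗ[A] M)) ≤ finrank k (↥W₁ ⊗[k] ↥V) :=
        aux_surj_finrank j hZtop
      have hV_lt : finrank k ↥V < finrank k (↥W₁ →ₗ[A] M) := by
        have hne : Submodule.restrictScalars k V ≠ ⊤ := fun h => hVtop (by
          apply Submodule.restrictScalars_injective k B (↥W₁ →ₗ[A] M)
          rw [h]
          ext z
          simp)
        exact Submodule.finrank_lt hne
      rw [Module.finrank_tensorProduct, Module.finrank_tensorProduct, hW₁d] at hle1
      have h2 : d * finrank k ↥V < d * finrank k (↥W₁ →ₗ[A] M) :=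
        mul_lt_mul_of_pos_left hV_lt hd_pos
      omega
  refine ⟨⟨↥W₁⟩, ⟨↥W₁ →ₗ[A] M⟩, hsimple₁, hsimpleM₂, ?_⟩
  exact ⟨e.symm⟩

/-- over an algebraically closed field `k`, every finite-dimensional simple
module `M` over `A ⊗[k] B` is isomorphic, as an `A ⊗[k] B`-module, to `M₁ ⊗[k] M₂`
with `M₁` a simple `A`-module and `M₂` a simple `B`-module. -/
theorem simple_module_over_tensor_factors
    (k A B : Type) [Field k] [IsAlgClosed k] [Ring A] [Ring B] [Algebra k A] [Algebra k B]
    (M : Type) [AddCommGroup M] [Module k M] [Module (A ⊗[k] B) M]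
    [IsScalarTower k (A ⊗[k] B) M] [FiniteDimensional k M]
    (hM : IsSimpleModule (A ⊗[k] B) M) :
    ∃ (P : ModuleOver k A) (Q : ModuleOver k B),
      IsSimpleModule A P.M ∧ IsSimpleModule B Q.M ∧
      letI := tensorAction k A B P.M Q.M
      Nonempty (M ≃ₗ[A ⊗[k] B] P.M ⊗[k] Q.M) := by
  letI : Module A M :=
    Module.compHom M (Algebra.TensorProduct.includeLeftRingHom : A →+* A ⊗[k] B)
  haveI : IsScalarTower k A M := ⟨fun c a m => by
    show ((c • a) ⊗ₜ[k] (1:B)) • m = c • ((a ⊗ₜ[k] (1:B)) • m)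
    rw [← TensorProduct.smul_tmul']
    exact smul_assoc c _ m⟩
  exact main_aux k A B M (fun a m => rfl) hM
end

section
/- Let V = ⊕_{n∈ℤ} V_n be a ℤ-graded vector space with a vertex operator structure Y and translation operator given by L(−1), satisfying Y(L(−1)a, z) = d/dz Y(a,z). Define for homogeneous a, b and m ≥ 2: a ∘_m b = Res_z ((1+z)^{wt a} / z^m) Y(a,z)b, and let O(V) be the span of all a ∘_2 b. Then for every m ≥ 2 and homogeneous a, b, the element a ∘_m b lies in O(V). -/
open scoped TensorProduct BigOperators

noncomputable section

/-- A vertex operator algebra structure (in coefficient form) on a complex vector space `V`.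
`op n a b` is the coefficient `a(n)b` of `Y(a,z)b = ∑ₙ a(n)b z^{-n-1}`; `grade n` is the
weight space `V_n`; Borcherds' identity encodes the Jacobi identity. -/
structure VOA (V : Type) [AddCommGroup V] [Module ℂ V] where
  op : ℤ → V →ₗ[ℂ] V →ₗ[ℂ] V
  grade : ℤ → Submodule ℂ V
  vacuum : V
  omega : V
  isInternal : DirectSum.IsInternal grade
  vacuum_grade : vacuum ∈ grade 0
  omega_grade : omega ∈ grade 2
  trunc : ∀ a b : V, ∃ N : ℤ, ∀ n ≥ N, op n a b = 0
  vacuum_op : ∀ (n : ℤ) (b : V), op n vacuum b = if n = -1 then b else 0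
  create : ∀ (a : V) (n : ℤ), 0 ≤ n → op n a vacuum = 0
  create_neg_one : ∀ a : V, op (-1) a vacuum = a
  deriv : ∀ (n : ℤ) (a b : V), op n (op 0 omega a) b = (-n) • op (n - 1) a b
  L_zero_grade : ∀ n : ℤ, ∀ a ∈ grade n, op 1 omega a = (n : ℂ) • a
  L_neg_one_grade : ∀ n : ℤ, ∀ a ∈ grade n, op 0 omega a ∈ grade (n + 1)
  op_grade : ∀ (p q n : ℤ), ∀ a ∈ grade p, ∀ b ∈ grade q, op n a b ∈ grade (p + q - n - 1)
  borcherds : ∀ (m n k : ℤ) (a b c : V),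
    ∑ᶠ j : ℕ, Ring.choose m j • op (m + k - j) (op (n + j) a b) c =
    ∑ᶠ j : ℕ, ((-1 : ℤ) ^ j * Ring.choose n j) •
      (op (m + n - j) a (op (k + j) b c) -
        (if Even n then (1 : ℤ) else -1) • op (n + k - j) b (op (m + j) a c))

namespace VOA

variable {V : Type} [AddCommGroup V] [Module ℂ V] (A : VOA V)

/-- `A.circm w m a b = Res_z ((1+z)^w / z^m) Y(a,z)b = ∑_{i≥0} C(w,i) a(i-m)b`
(for `a` homogeneous of weight `w`). -/
def circm (w m : ℤ) (a b : V) : V :=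
  ∑ᶠ i : ℕ, Ring.choose w i • A.op ((i : ℤ) - m) a b

/-- Zhu's product `a * b = Res_z ((1+z)^{wt a} / z) Y(a,z)b` for `a` of weight `w`. -/
def star (w : ℤ) (a b : V) : V := A.circm w 1 a b

/-- The subspace `O(V)`, spanned by the elements `a ∘ b` with `a` homogeneous. -/
def Osub : Submodule ℂ V :=
  Submodule.span ℂ {x | ∃ (w : ℤ) (a b : V), a ∈ A.grade w ∧ x = A.circm w 2 a b}

end VOA

/-- A module over the vertex operator algebra `(V, A)` in coefficient form:
`mop n a m = a(n)m`, with the `ℤ₊`-grading `grade`. -/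
structure VMod {V : Type} [AddCommGroup V] [Module ℂ V] (A : VOA V)
    (M : Type) [AddCommGroup M] [Module ℂ M] where
  mop : ℤ → V →ₗ[ℂ] M →ₗ[ℂ] M
  grade : ℕ → Submodule ℂ M
  isInternal : DirectSum.IsInternal grade
  trunc : ∀ (a : V) (x : M), ∃ N : ℤ, ∀ n ≥ N, mop n a x = 0
  vacuum_mop : ∀ (n : ℤ) (x : M), mop n A.vacuum x = if n = -1 then x else 0
  deriv : ∀ (n : ℤ) (a : V) (x : M),
    mop n (A.op 0 A.omega a) x = (-n) • mop (n - 1) a x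
  mop_grade : ∀ (p : ℤ) (q : ℕ) (n : ℤ), ∀ a ∈ A.grade p, ∀ x ∈ grade q,
    (((q : ℤ) + p - n - 1 < 0 → mop n a x = 0) ∧
     ∀ r : ℕ, (r : ℤ) = (q : ℤ) + p - n - 1 → mop n a x ∈ grade r)
  borcherds : ∀ (m n k : ℤ) (a b : V) (x : M),
    ∑ᶠ j : ℕ, Ring.choose m j • mop (m + k - j) (A.op (n + j) a b) x =
    ∑ᶠ j : ℕ, ((-1 : ℤ) ^ j * Ring.choose n j) •
      (mop (m + n - j) a (mop (k + j) b x) -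
        (if Even n then (1 : ℤ) else -1) • mop (n + k - j) b (mop (m + j) a x))

namespace VMod

variable {V : Type} [AddCommGroup V] [Module ℂ V] {A : VOA V}
variable {M : Type} [AddCommGroup M] [Module ℂ M] (S : VMod A M)

/-- `Res_z ((1+z)^w / z^m) Y_M(a,z)x`. -/
def circm (w m : ℤ) (a : V) (x : M) : M :=
  ∑ᶠ i : ℕ, Ring.choose w i • S.mop ((i : ℤ) - m) a x

/-- The subspace `O(M)` spanned by `a ∘ x = Res_z ((1+z)^{wt a}/z²) Y_M(a,z)x`. -/
def Osub : Submodule ℂ M :=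
  Submodule.span ℂ {y | ∃ (w : ℤ) (a : V) (x : M), a ∈ A.grade w ∧ y = S.circm w 2 a x}

/-- The left action of `A(V)` on `A(M)` at the level of representatives:
`a · x = Res_z ((1+z)^{wt a}/z) Y_M(a,z)x`. -/
def actL (w : ℤ) (a : V) (x : M) : M := S.circm w 1 a x

/-- The right action of `A(V)` on `A(M)` at the level of representatives:
`x · a = Res_z ((1+z)^{wt a - 1}/z) Y_M(a,z)x`. -/
def actR (w : ℤ) (a : V) (x : M) : M :=
  ∑ᶠ i : ℕ, Ring.choose (w - 1) i • S.mop ((i : ℤ) - 1) a x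

/-- A submodule invariant under all the mode operators. -/
def Invariant (p : Submodule ℂ M) : Prop := ∀ (n : ℤ) (a : V), ∀ x ∈ p, S.mop n a x ∈ p

/-- Irreducibility of a `V`-module. -/
def Irreducible : Prop :=
  (⊤ : Submodule ℂ M) ≠ ⊥ ∧ ∀ p : Submodule ℂ M, S.Invariant p → p = ⊥ ∨ p = ⊤

/-- `L(0)` acts semisimply on `M`. -/
def L0Semisimple : Prop :=
  (⨆ μ : ℂ, Module.End.eigenspace (S.mop 1 A.omega) μ) = ⊤

/-- `M` is finitely generated over `V`. -/
def FG : Prop :=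
  ∃ s : Finset M, ∀ p : Submodule ℂ M, S.Invariant p → (↑s : Set M) ⊆ p → p = ⊤

/-- An invariant submodule that is simple in the lattice of invariant submodules. -/
def SimpleSub (p : Submodule ℂ M) : Prop :=
  S.Invariant p ∧ p ≠ ⊥ ∧ ∀ q : Submodule ℂ M, S.Invariant q → q ≤ p → q = ⊥ ∨ q = p

/-- Complete reducibility: `M` is a (direct) sum of irreducible submodules. -/
def CompletelyReducible : Prop :=
  sSup {p : Submodule ℂ M | S.SimpleSub p} = ⊤

end VMod

/-- Isomorphism of `V`-modules. -/
def VModIso {V : Type} [AddCommGroup V] [Module ℂ V] {A : VOA V}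
    {M M' : Type} [AddCommGroup M] [Module ℂ M] [AddCommGroup M'] [Module ℂ M']
    (S : VMod A M) (S' : VMod A M') : Prop :=
  ∃ e : M ≃ₗ[ℂ] M', ∀ (n : ℤ) (a : V) (x : M), e (S.mop n a x) = S'.mop n a (e x)

/-- A bundled module over the vertex operator algebra `(V, A)`. -/
structure VModBundle {V : Type} [AddCommGroup V] [Module ℂ V] (A : VOA V) where
  M : Type
  [acg : AddCommGroup M]
  [modc : Module ℂ M]
  S : VMod A M

attribute [instance] VModBundle.acg VModBundle.modc

/-- Rationality of a VOA (with the standing assumption that `L(0)` acts semisimply on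
all modules considered): finitely many irreducibles, and every finitely generated module
is completely reducible. -/
def VOA.Rational {V : Type} [AddCommGroup V] [Module ℂ V] (A : VOA V) : Prop :=
  (∃ (n : ℕ) (f : Fin n → VModBundle A),
    ∀ (M : Type) [AddCommGroup M] [Module ℂ M] (S : VMod A M),
      S.Irreducible → S.L0Semisimple → ∃ i, VModIso S (f i).S) ∧
  (∀ (M : Type) [AddCommGroup M] [Module ℂ M] (S : VMod A M),
      S.FG → S.L0Semisimple → S.CompletelyReducible)

section Tensor

variable {V₁ V₂ : Type} [AddCommGroup V₁] [Module ℂ V₁] [AddCommGroup V₂] [Module ℂ V₂]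

/-- The tensor product of two submodules, as a submodule of the tensor product. -/
def tsub (p : Submodule ℂ V₁) (q : Submodule ℂ V₂) : Submodule ℂ (V₁ ⊗[ℂ] V₂) :=
  LinearMap.range (TensorProduct.map p.subtype q.subtype)

/-- `T` is the tensor product VOA structure of `A` and `B` on `V₁ ⊗[ℂ] V₂`:
`Y(a ⊗ b, z) = Y(a,z) ⊗ Y(b,z)`, graded pieces `(V₁ ⊗ V₂)_n = ⊕_{p+q=n} (V₁)_p ⊗ (V₂)_q`,
vacuum `1 ⊗ 1` and Virasoro element `ω₁ ⊗ 1 + 1 ⊗ ω₂`. -/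
def IsTensorVOA (A : VOA V₁) (B : VOA V₂) (T : VOA (V₁ ⊗[ℂ] V₂)) : Prop :=
  (∀ (n : ℤ) (a c : V₁) (b d : V₂),
      T.op n (a ⊗ₜ[ℂ] b) (c ⊗ₜ[ℂ] d) =
        ∑ᶠ i : ℤ, (A.op i a c) ⊗ₜ[ℂ] (B.op (n - 1 - i) b d)) ∧
  (∀ n : ℤ, T.grade n = ⨆ p : ℤ, tsub (A.grade p) (B.grade (n - p))) ∧
  T.vacuum = A.vacuum ⊗ₜ[ℂ] B.vacuum ∧
  T.omega = A.omega ⊗ₜ[ℂ] B.vacuum + A.vacuum ⊗ₜ[ℂ] B.omega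

variable {M₁ M₂ : Type} [AddCommGroup M₁] [Module ℂ M₁] [AddCommGroup M₂] [Module ℂ M₂]

/-- `S` is the tensor product module structure of `S₁` and `S₂` over the tensor product
VOA `T`: `Y(a ⊗ b, z) = Y(a,z) ⊗ Y(b,z)` and `(M₁ ⊗ M₂)(n) = ⊕_{p+q=n} M₁(p) ⊗ M₂(q)`. -/
def IsTensorVMod {A : VOA V₁} {B : VOA V₂} {T : VOA (V₁ ⊗[ℂ] V₂)}
    (S₁ : VMod A M₁) (S₂ : VMod B M₂) (S : VMod T (M₁ ⊗[ℂ] M₂)) : Prop :=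
  (∀ (n : ℤ) (a : V₁) (b : V₂) (x : M₁) (y : M₂),
      S.mop n (a ⊗ₜ[ℂ] b) (x ⊗ₜ[ℂ] y) =
        ∑ᶠ i : ℤ, (S₁.mop i a x) ⊗ₜ[ℂ] (S₂.mop (n - 1 - i) b y)) ∧
  (∀ n : ℕ, S.grade n = ⨆ p : ℕ, ⨆ _ : p ≤ n, tsub (S₁.grade p) (S₂.grade (n - p)))

end Tensor

/-- An intertwining operator of type `(M³; M¹, M²)` in coefficient form:
`I(u, z)v = ∑_{α ∈ ℂ} (I α u v) z^{-α-1}`. -/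
structure IsIntertwiner {V : Type} [AddCommGroup V] [Module ℂ V] (A : VOA V)
    {M1 M2 M3 : Type} [AddCommGroup M1] [Module ℂ M1] [AddCommGroup M2] [Module ℂ M2]
    [AddCommGroup M3] [Module ℂ M3]
    (S1 : VMod A M1) (S2 : VMod A M2) (S3 : VMod A M3)
    (I : ℂ → M1 →ₗ[ℂ] M2 →ₗ[ℂ] M3) : Prop where
  trunc : ∀ (α : ℂ) (u : M1) (v : M2), ∃ N : ℕ, ∀ n : ℕ, n ≥ N → I (α + n) u v = 0
  deriv : ∀ (α : ℂ) (u : M1) (v : M2),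
    I α (S1.mop 0 A.omega u) v = (-α) • I (α - 1) u v
  jacobi : ∀ (m n : ℤ) (α : ℂ) (a : V) (u : M1) (v : M2),
    ∑ᶠ j : ℕ, Ring.choose m j • I (m + α - j) (S1.mop (n + j) a u) v =
    ∑ᶠ j : ℕ, ((-1 : ℤ) ^ j * Ring.choose n j) •
      (S3.mop (m + n - j) a (I (α + j) u v) -
        (if Even n then (1 : ℤ) else -1) • I (n + α - j) u (S2.mop (m + j) a v))

/-- The fusion rule: the dimension (as a cardinal) of the space of intertwining
operators of type `(M³; M¹, M²)`. -/
noncomputable def fusionRule {V : Type} [AddCommGroup V] [Module ℂ V] (A : VOA V)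
    {M1 M2 M3 : Type} [AddCommGroup M1] [Module ℂ M1] [AddCommGroup M2] [Module ℂ M2]
    [AddCommGroup M3] [Module ℂ M3]
    (S1 : VMod A M1) (S2 : VMod A M2) (S3 : VMod A M3) : Cardinal :=
  Module.rank ℂ (Submodule.span ℂ {I : ℂ → M1 →ₗ[ℂ] M2 →ₗ[ℂ] M3 | IsIntertwiner A S1 S2 S3 I})



open Polynomial in
private lemma choose_absorb' (r : ℤ) (k : ℕ) :
    ((k : ℤ) + 1) * Ring.choose r (k + 1) = (r - (k : ℤ)) * Ring.choose r k := by
  have h1 := Ring.descPochhammer_eq_factorial_smul_choose r (k + 1)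
  have h2 := Ring.descPochhammer_eq_factorial_smul_choose r k
  rw [descPochhammer_succ_right, smeval_mul, h2, smeval_sub, smeval_X, smeval_natCast] at h1
  have hfac : (Nat.factorial k : ℤ) ≠ 0 := by exact_mod_cast Nat.factorial_ne_zero k
  apply mul_left_cancel₀ hfac
  have hft : ((k+1).factorial : ℤ) = (k.factorial : ℤ) * ((k:ℤ)+1) := by
    rw [Nat.factorial_succ]; push_cast; ring
  rw [nsmul_eq_mul, nsmul_eq_mul] at h1
  simp only [pow_one, pow_zero, nsmul_eq_mul, mul_one] at h1
  linear_combination -h1 - Ring.choose r (k + 1) * hft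

private lemma scalar_id' (w m : ℤ) (i : ℕ) :
    m * Ring.choose w (i + 1)
      = (m - ((i : ℤ) + 1)) * Ring.choose (w + 1) (i + 1) + (w + 1 - m) * Ring.choose w i := by
  linear_combination ((i : ℤ) + 1 - m) * (Ring.choose_succ_succ w i) + choose_absorb' w i

private lemma key_identity {V : Type} [AddCommGroup V] [Module ℂ V] (A : VOA V)
    (w m : ℤ) (a b : V) :
    m • A.circm w (m + 1) a b
      = A.circm (w + 1) m (A.op 0 A.omega a) b + (w + 1 - m) • A.circm w m a b := by
  obtain ⟨N, hN⟩ := A.trunc a b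
  set K : ℕ := (N + m + 1).toNat with hK
  have hKge : (N + m + 1 : ℤ) ≤ (K : ℤ) := Int.self_le_toNat _
  set F : ℕ → V := fun i => A.op ((i : ℤ) - m - 1) a b with hF
  have hFz : ∀ i : ℕ, K ≤ i → F i = 0 := by
    intro i hi
    apply hN
    have : (K : ℤ) ≤ (i : ℤ) := by exact_mod_cast hi
    omega
  have hGz : ∀ i : ℕ, K ≤ i → A.op ((i : ℤ) - m) a b = 0 := by
    intro i hi
    apply hN
    have : (K : ℤ) ≤ (i : ℤ) := by exact_mod_cast hi
    omega
  have e1 : A.circm w (m + 1) a b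
      = ∑ i ∈ Finset.range (K + 1), Ring.choose w i • F i := by
    rw [VOA.circm]
    rw [finsum_eq_sum_of_support_subset _
      (s := Finset.range (K + 1))
      (by
        intro i hi
        simp only [Function.mem_support, ne_eq] at hi
        simp only [Finset.coe_range, Set.mem_Iio]
        by_contra hmem
        push_neg at hmem
        apply hi
        rw [show (i : ℤ) - (m + 1) = (i : ℤ) - m - 1 by ring]
        rw [show A.op ((i : ℤ) - m - 1) a b = F i from rfl, hFz i (by omega), smul_zero])]
    refine Finset.sum_congr rfl fun i _ => ?_
    rw [show (i : ℤ) - (m + 1) = (i : ℤ) - m - 1 by ring]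
  have hder : ∀ i : ℕ, A.op ((i : ℤ) - m) (A.op 0 A.omega a) b = (m - (i : ℤ)) • F i := by
    intro i
    rw [A.deriv]
    rw [show (-((i : ℤ) - m)) = m - (i : ℤ) by ring]
  have e2 : A.circm (w + 1) m (A.op 0 A.omega a) b
      = ∑ i ∈ Finset.range (K + 1), Ring.choose (w + 1) i • ((m - (i : ℤ)) • F i) := by
    rw [VOA.circm]
    rw [finsum_eq_sum_of_support_subset _
      (s := Finset.range (K + 1))
      (by
        intro i hi
        simp only [Function.mem_support, ne_eq] at hi
        simp only [Finset.coe_range, Set.mem_Iio]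
        by_contra hmem
        push_neg at hmem
        apply hi
        rw [hder i, hFz i (by omega), smul_zero, smul_zero])]
    refine Finset.sum_congr rfl fun i _ => ?_
    rw [hder i]
  have hsh : ∀ i : ℕ, A.op ((i : ℤ) - m) a b = F (i + 1) := by
    intro i
    show _ = A.op (((i + 1 : ℕ) : ℤ) - m - 1) a b
    push_cast
    ring
  have e3 : A.circm w m a b
      = ∑ i ∈ Finset.range K, Ring.choose w i • F (i + 1) := by
    rw [VOA.circm]
    rw [finsum_eq_sum_of_support_subset _
      (s := Finset.range K)
      (by
        intro i hi
        simp only [Function.mem_support, ne_eq] at hi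
        simp only [Finset.coe_range, Set.mem_Iio]
        by_contra hmem
        push_neg at hmem
        apply hi
        rw [hGz i (by omega), smul_zero])]
    refine Finset.sum_congr rfl fun i _ => ?_
    rw [hsh i]
  rw [e1, e2, e3]
  have e4 : (w + 1 - m) • ∑ i ∈ Finset.range K, Ring.choose w i • F (i + 1)
      = ∑ i ∈ Finset.range (K + 1),
          ((w + 1 - m) * (if h : i = 0 then 0 else Ring.choose w (i - 1))) • F i := by
    rw [Finset.sum_range_succ']
    simp only [dif_pos, dif_neg (Nat.succ_ne_zero _), Nat.add_sub_cancel]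
    rw [mul_zero, zero_smul, add_zero, Finset.smul_sum]
    refine Finset.sum_congr rfl fun i _ => ?_
    rw [smul_smul]
  rw [e4, Finset.smul_sum, ← Finset.sum_add_distrib]
  refine Finset.sum_congr rfl fun i _ => ?_
  rw [smul_smul, smul_smul, ← add_smul]
  congr 1
  cases i with
  | zero =>
      simp [Ring.choose_zero_right]
  | succ j =>
      rw [dif_neg (Nat.succ_ne_zero j), Nat.add_sub_cancel]
      have h := scalar_id' w m j
      push_cast
      linarith [h]

/-- for every `m ≥ 2` and homogeneous `a`, the element
`a ∘_m b = Res_z ((1+z)^{wt a}/z^m) Y(a,z)b` lies in `O(V)`. -/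
theorem circm_mem_Osub {V : Type} [AddCommGroup V] [Module ℂ V] (A : VOA V)
    (m : ℤ) (hm : 2 ≤ m) (w : ℤ) (a : V) (ha : a ∈ A.grade w) (b : V) :
    A.circm w m a b ∈ A.Osub := by
  have main : ∀ n : ℤ, 2 ≤ n → ∀ w : ℤ, ∀ a : V, a ∈ A.grade w → A.circm w n a b ∈ A.Osub := by
    refine Int.le_induction ?_ ?_
    · intro w a ha
      exact Submodule.subset_span ⟨w, a, b, ha, rfl⟩
    · intro n hn ih w a ha
      have hkey := key_identity A w n a b
      have hmem : (n : ℤ) • A.circm w (n + 1) a b ∈ A.Osub := by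
        rw [hkey]
        exact Submodule.add_mem _
          (ih (w + 1) (A.op 0 A.omega a) (A.L_neg_one_grade w a ha))
          (zsmul_mem (ih w a ha) (w + 1 - n))
      have hn0 : (n : ℂ) ≠ 0 := by
        have : n ≠ 0 := by omega
        exact_mod_cast this
      have : A.circm w (n + 1) a b
          = (n : ℂ)⁻¹ • ((n : ℤ) • A.circm w (n + 1) a b) := by
        rw [← Int.cast_smul_eq_zsmul ℂ, smul_smul, inv_mul_cancel₀ hn0, one_smul]
      rw [this]
      exact Submodule.smul_mem _ _ hmem
  exact main m hm w a ha

end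
end

section
/- Let V₁ and V₂ be vertex operator algebras with Zhu algebras A(V₁) and A(V₂). Then O(V₁ ⊗ V₂) = O(V₁) ⊗ V₂ + V₁ ⊗ O(V₂), where V₁ ⊗ V₂ carries the tensor product vertex operator structure Y(a⊗b, z) = Y(a,z) ⊗ Y(b,z). -/
open scoped TensorProduct BigOperators

noncomputable section

section ChooseAux

private theorem absorb_choose (w : ℤ) (k : ℕ) :
    ((k:ℤ)+1) * Ring.choose w (k+1) = (w - k) * Ring.choose w k := by
  have h := Ring.descPochhammer_eq_factorial_smul_choose (R := ℤ) w (k+1)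
  have h2 := Ring.descPochhammer_eq_factorial_smul_choose (R := ℤ) w k
  have h3 : (descPochhammer ℤ (k+1)).smeval w = (descPochhammer ℤ k).smeval w * (w - k) := by
    rw [descPochhammer_succ_right]
    simp [Polynomial.smeval_mul, Polynomial.smeval_sub, Polynomial.smeval_X,
      Polynomial.smeval_natCast]
  have hfac : (Nat.factorial k : ℤ) ≠ 0 := by exact_mod_cast Nat.factorial_ne_zero k
  rw [h, h2, Nat.factorial_succ] at h3
  apply mul_left_cancel₀ hfac
  simp only [nsmul_eq_mul, Nat.cast_mul, Nat.cast_add, Nat.cast_one] at h3 ⊢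
  ring_nf at h3 ⊢
  linarith [h3]

private theorem key_choose (w m : ℤ) (k : ℕ) :
    Ring.choose (w+1) (k+1) * (m - ((k:ℤ)+1)) =
      m * Ring.choose w (k+1) + (m - w - 1) * Ring.choose w k := by
  rw [Ring.choose_succ_succ]
  linear_combination (-1 : ℤ) * absorb_choose w k

private theorem support_subset_range {W : Type*} [AddCommGroup W]
    (co : ℕ → ℤ) (g : ℤ → W) (N m : ℤ) (K : ℕ)
    (hg : ∀ n, N ≤ n → g n = 0) (hK : N + m ≤ K) :
    (Function.support fun i : ℕ => co i • g ((i:ℤ) - m)) ⊆ ↑(Finset.range K) := by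
  intro i hi
  simp only [Function.mem_support] at hi
  simp only [Finset.coe_range, Set.mem_Iio]
  by_contra h
  push_neg at h
  apply hi
  rw [hg _ (by omega)]
  simp

end ChooseAux

namespace VOA

variable {V : Type} [AddCommGroup V] [Module ℂ V] (A : VOA V)

private lemma circm_support_finite (w m : ℤ) (a b : V) :
    (Function.support fun i : ℕ => Ring.choose w i • A.op ((i:ℤ) - m) a b).Finite := by
  obtain ⟨N, hN⟩ := A.trunc a b
  exact Set.Finite.subset (Finset.range (N + m).toNat).finite_toSet
    (support_subset_range _ (fun n => A.op n a b) N m _ (fun n hn => hN n hn) (by omega))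

private lemma circm_add_right (w m : ℤ) (a b c : V) :
    A.circm w m a (b + c) = A.circm w m a b + A.circm w m a c := by
  unfold circm
  rw [← finsum_add_distrib (A.circm_support_finite w m a b) (A.circm_support_finite w m a c)]
  exact finsum_congr fun i => by rw [map_add, smul_add]

private lemma circm_smul_right (w m : ℤ) (a : V) (r : ℂ) (b : V) :
    A.circm w m a (r • b) = r • A.circm w m a b := by
  unfold circm
  rw [smul_finsum' r (A.circm_support_finite w m a b)]
  exact finsum_congr fun i => by rw [map_smul, smul_comm]

private lemma circm_zero_right (w m : ℤ) (a : V) : A.circm w m a 0 = 0 := by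
  unfold circm
  simp

private lemma circm_add_left (w m : ℤ) (a b c : V) :
    A.circm w m (a + b) c = A.circm w m a c + A.circm w m b c := by
  unfold circm
  rw [← finsum_add_distrib (A.circm_support_finite w m a c) (A.circm_support_finite w m b c)]
  exact finsum_congr fun i => by rw [map_add, LinearMap.add_apply, smul_add]

private lemma circm_zero_left (w m : ℤ) (c : V) : A.circm w m 0 c = 0 := by
  unfold circm
  simp

end VOA
namespace VOA

variable {V : Type} [AddCommGroup V] [Module ℂ V] (A : VOA V)

private lemma circm_eq_sum (w m : ℤ) (a b : V) {N : ℤ} (hN : ∀ n ≥ N, A.op n a b = 0)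
    (K : ℕ) (hK : N + m ≤ K) :
    A.circm w m a b = ∑ i ∈ Finset.range K, Ring.choose w i • A.op ((i:ℤ) - m) a b := by
  unfold circm
  exact finsum_eq_sum_of_support_subset _
    (support_subset_range _ (fun n => A.op n a b) N m K (fun n hn => hN n hn) hK)

private lemma circm_deriv (w m : ℤ) (a c : V) :
    A.circm (w+1) m (A.op 0 A.omega a) c =
      m • A.circm w (m+1) a c + (m - w - 1) • A.circm w m a c := by
  obtain ⟨N, hN⟩ := A.trunc a c
  set L := (N + m + 2).toNat with hLdef
  have hL : (N + m + 2 : ℤ) ≤ L := by omega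
  -- rewrite the LHS
  have e1 : A.circm (w+1) m (A.op 0 A.omega a) c =
      ∑ i ∈ Finset.range (L+1), (Ring.choose (w+1) i * (m - i)) • A.op ((i:ℤ) - (m+1)) a c := by
    unfold circm
    have : ∀ i : ℕ, Ring.choose (w+1) i • A.op ((i:ℤ) - m) (A.op 0 A.omega a) c =
        (Ring.choose (w+1) i * (m - i)) • A.op ((i:ℤ) - (m+1)) a c := by
      intro i
      rw [A.deriv]
      rw [smul_smul]
      congr 1
      · ring
      · congr 1; ring
    rw [finsum_congr this]
    refine finsum_eq_sum_of_support_subset _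
      (support_subset_range _ (fun n => A.op n a c) N (m+1) (L+1) (fun n hn => hN n hn)
        (by omega))
  have e2 : A.circm w (m+1) a c =
      ∑ i ∈ Finset.range (L+1), Ring.choose w i • A.op ((i:ℤ) - (m+1)) a c :=
    A.circm_eq_sum w (m+1) a c hN (L+1) (by omega)
  have e3 : A.circm w m a c =
      ∑ i ∈ Finset.range (L+1), Ring.choose w i • A.op ((i:ℤ) - m) a c :=
    A.circm_eq_sum w m a c hN (L+1) (by omega)
  rw [e1, e2, e3, Finset.smul_sum, Finset.smul_sum]
  simp only [smul_smul]
  -- last term of the third sum vanishes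
  have hlast : ((m - w - 1) * Ring.choose w L) • A.op ((L:ℤ) - m) a c = 0 := by
    rw [hN _ (by omega), smul_zero]
  rw [Finset.sum_range_succ (fun i => ((m - w - 1) * Ring.choose w i) • A.op ((i:ℤ) - m) a c) L,
    hlast, add_zero]
  -- now use the shift identity
  have key : ∑ i ∈ Finset.range (L+1),
      ((Ring.choose (w+1) i * (m - i)) • A.op ((i:ℤ) - (m+1)) a c
        - (m * Ring.choose w i) • A.op ((i:ℤ) - (m+1)) a c) =
      ∑ i ∈ Finset.range L, ((m - w - 1) * Ring.choose w i) • A.op ((i:ℤ) - m) a c := by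
    rw [Finset.sum_range_succ' (fun i =>
      (Ring.choose (w+1) i * (m - i)) • A.op ((i:ℤ) - (m+1)) a c
        - (m * Ring.choose w i) • A.op ((i:ℤ) - (m+1)) a c) L]
    have h0 : (Ring.choose (w+1) 0 * (m - (0:ℕ))) • A.op (((0:ℕ):ℤ) - (m+1)) a c
        - (m * Ring.choose w 0) • A.op (((0:ℕ):ℤ) - (m+1)) a c = 0 := by
      simp [Ring.choose_zero_right]
    rw [h0, add_zero]
    refine Finset.sum_congr rfl fun k _ => ?_
    have hidx : ((k:ℤ) + 1) - (m+1) = (k:ℤ) - m := by ring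
    have hcast : (((k+1 : ℕ)):ℤ) = (k:ℤ) + 1 := by push_cast; ring_nf
    rw [hcast, hidx]
    rw [← sub_smul]
    congr 1
    have := key_choose w m k
    linarith [this]
  rw [Finset.sum_sub_distrib] at key
  rw [← key]; abel

private lemma circm_mem_Osub_aux (k : ℕ) :
    ∀ (w : ℤ) (a c : V), a ∈ A.grade w → A.circm w (2 + k) a c ∈ A.Osub := by
  induction k with
  | zero =>
    intro w a c ha
    exact Submodule.subset_span ⟨w, a, c, ha, rfl⟩
  | succ k ih =>
    intro w a c ha
    have hc : ((2:ℤ) + ((k+1:ℕ):ℤ)) = (2 + (k:ℤ)) + 1 := by push_cast; ring_nf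
    rw [hc]
    have ha' : A.op 0 A.omega a ∈ A.grade (w + 1) := A.L_neg_one_grade w a ha
    have h1 : A.circm (w+1) (2+(k:ℤ)) (A.op 0 A.omega a) c ∈ A.Osub := ih (w+1) _ c ha'
    have h2 : A.circm w (2+(k:ℤ)) a c ∈ A.Osub := ih w a c ha
    have hnz : (((2 + (k:ℤ)) : ℤ) : ℂ) ≠ 0 := by
      exact_mod_cast (by omega : ¬ (2 + (k:ℤ)) = 0)
    have h3 : (((2 + (k:ℤ)) : ℤ) : ℂ) • A.circm w ((2+(k:ℤ))+1) a c =
        A.circm (w+1) (2+(k:ℤ)) (A.op 0 A.omega a) c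
          - (((2 + (k:ℤ) - w - 1) : ℤ) : ℂ) • A.circm w (2+(k:ℤ)) a c := by
      rw [Int.cast_smul_eq_zsmul, Int.cast_smul_eq_zsmul, A.circm_deriv w (2+(k:ℤ)) a c]
      abel
    have heq : A.circm w ((2+(k:ℤ))+1) a c =
        ((((2 + (k:ℤ)) : ℤ) : ℂ))⁻¹ • (A.circm (w+1) (2+(k:ℤ)) (A.op 0 A.omega a) c
          - (((2 + (k:ℤ) - w - 1) : ℤ) : ℂ) • A.circm w (2+(k:ℤ)) a c) := by
      rw [← h3]
      rw [inv_smul_smul₀ hnz]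
    rw [heq]
    exact Submodule.smul_mem _ _ (Submodule.sub_mem _ h1 (Submodule.smul_mem _ _ h2))

end VOA
namespace VOA

variable {V : Type} [AddCommGroup V] [Module ℂ V] (A : VOA V)

private lemma circm_mem_Osub (m : ℤ) (hm : 2 ≤ m) (w : ℤ) (a c : V) (ha : a ∈ A.grade w) :
    A.circm w m a c ∈ A.Osub := by
  have : m = 2 + ((m - 2).toNat : ℤ) := by omega
  rw [this]
  exact A.circm_mem_Osub_aux (m-2).toNat w a c ha

end VOA

section TensorAux

open TensorProduct

variable {V₁ V₂ : Type} [AddCommGroup V₁] [Module ℂ V₁] [AddCommGroup V₂] [Module ℂ V₂]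

private lemma zsmul_tmul' (n : ℤ) (x : V₁) (y : V₂) : (n • x) ⊗ₜ[ℂ] y = n • (x ⊗ₜ[ℂ] y) := by
  rw [← Int.cast_smul_eq_zsmul ℂ, ← Int.cast_smul_eq_zsmul ℂ, TensorProduct.smul_tmul']

private lemma tmul_zsmul' (n : ℤ) (x : V₁) (y : V₂) : x ⊗ₜ[ℂ] (n • y) = n • (x ⊗ₜ[ℂ] y) := by
  rw [← Int.cast_smul_eq_zsmul ℂ, ← Int.cast_smul_eq_zsmul ℂ, TensorProduct.tmul_smul]

variable (A : VOA V₁) (B : VOA V₂) (T : VOA (V₁ ⊗[ℂ] V₂))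

private lemma circm_tmul_vac (hT : IsTensorVOA A B T) (w : ℤ) (a c : V₁) (d : V₂) :
    T.circm w 2 (a ⊗ₜ[ℂ] B.vacuum) (c ⊗ₜ[ℂ] d) = (A.circm w 2 a c) ⊗ₜ[ℂ] d := by
  have hstep : ∀ i : ℕ, T.op ((i:ℤ) - 2) (a ⊗ₜ[ℂ] B.vacuum) (c ⊗ₜ[ℂ] d)
      = (A.op ((i:ℤ) - 2) a c) ⊗ₜ[ℂ] d := by
    intro i
    rw [hT.1]
    rw [finsum_eq_single _ ((i:ℤ) - 2)
      (fun j hj => by rw [B.vacuum_op, if_neg (by omega), TensorProduct.tmul_zero])]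
    rw [show (i:ℤ) - 2 - 1 - ((i:ℤ) - 2) = -1 by ring, B.vacuum_op, if_pos rfl]
  unfold VOA.circm
  rw [finsum_congr (fun i => by rw [hstep i])]
  have hmap := AddMonoidHom.map_finsum
    (g := (((TensorProduct.mk ℂ V₁ V₂).flip d).toAddMonoidHom))
    (f := fun i : ℕ => Ring.choose w i • A.op ((i:ℤ) - 2) a c)
    (A.circm_support_finite w 2 a c)
  simp only [LinearMap.toAddMonoidHom_coe, LinearMap.flip_apply, TensorProduct.mk_apply] at hmap
  rw [hmap]
  exact finsum_congr fun i => (zsmul_tmul' _ _ _).symm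

private lemma circm_vac_tmul (hT : IsTensorVOA A B T) (w : ℤ) (b : V₂) (c : V₁) (d : V₂) :
    T.circm w 2 (A.vacuum ⊗ₜ[ℂ] b) (c ⊗ₜ[ℂ] d) = c ⊗ₜ[ℂ] (B.circm w 2 b d) := by
  have hstep : ∀ i : ℕ, T.op ((i:ℤ) - 2) (A.vacuum ⊗ₜ[ℂ] b) (c ⊗ₜ[ℂ] d)
      = c ⊗ₜ[ℂ] (B.op ((i:ℤ) - 2) b d) := by
    intro i
    rw [hT.1]
    rw [finsum_eq_single _ (-1 : ℤ)
      (fun j hj => by rw [A.vacuum_op, if_neg hj, TensorProduct.zero_tmul])]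
    rw [A.vacuum_op, if_pos rfl, show (i:ℤ) - 2 - 1 - (-1) = (i:ℤ) - 2 by ring]
  unfold VOA.circm
  rw [finsum_congr (fun i => by rw [hstep i])]
  have hmap := AddMonoidHom.map_finsum
    (g := ((TensorProduct.mk ℂ V₁ V₂ c).toAddMonoidHom))
    (f := fun i : ℕ => Ring.choose w i • B.op ((i:ℤ) - 2) b d)
    (B.circm_support_finite w 2 b d)
  simp only [LinearMap.toAddMonoidHom_coe, TensorProduct.mk_apply] at hmap
  rw [hmap]
  exact finsum_congr fun i => (tmul_zsmul' _ _ _).symm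

end TensorAux
section BigLemma

open Finset

variable {V₁ V₂ : Type} [AddCommGroup V₁] [Module ℂ V₁] [AddCommGroup V₂] [Module ℂ V₂]

private lemma sum_triangle_eq {M : Type*} [AddCommMonoid M] (I : ℕ) (G : ℕ → ℕ → M)
    (hG : ∀ s t, I ≤ s + t → G s t = 0) :
    ∑ i ∈ Finset.range I, ∑ st ∈ Finset.HasAntidiagonal.antidiagonal i, G st.1 st.2
      = ∑ s ∈ Finset.range I, ∑ t ∈ Finset.range I, G s t := by
  have hdisj : Set.PairwiseDisjoint ↑(Finset.range I)
      (fun i : ℕ => (Finset.HasAntidiagonal.antidiagonal i : Finset (ℕ × ℕ))) := by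
    intro i _ j _ hij
    simp only [Function.onFun]
    rw [Finset.disjoint_left]
    intro x hx hx'
    rw [Finset.HasAntidiagonal.mem_antidiagonal] at hx hx'
    omega
  rw [← Finset.sum_biUnion hdisj, ← Finset.sum_product']
  apply Finset.sum_subset
  · intro x hx
    simp only [Finset.mem_biUnion, Finset.mem_range, Finset.HasAntidiagonal.mem_antidiagonal] at hx
    obtain ⟨i, hi, hxi⟩ := hx
    simp only [Finset.mem_product, Finset.mem_range]
    omega
  · intro x hx hnx
    apply hG
    by_contra h
    push_neg at h
    exact hnx (Finset.mem_biUnion.2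
      ⟨x.1 + x.2, Finset.mem_range.2 h, Finset.HasAntidiagonal.mem_antidiagonal.2 rfl⟩)

private def Fterm (A : VOA V₁) (B : VOA V₂) (p q : ℤ) (a c : V₁) (b d : V₂)
    (s t : ℕ) (j : ℤ) : V₁ ⊗[ℂ] V₂ :=
  (Ring.choose p s * Ring.choose q t) • (A.op j a c ⊗ₜ[ℂ] B.op ((s:ℤ) + (t:ℤ) - 3 - j) b d)

variable (A : VOA V₁) (B : VOA V₂) (T : VOA (V₁ ⊗[ℂ] V₂))

set_option maxHeartbeats 2000000 in
private lemma circm_tmul_tmul (hT : IsTensorVOA A B T) (p q : ℤ) (a c : V₁) (b d : V₂) :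
    ∃ R : Finset ℤ, T.circm (p + q) 2 (a ⊗ₜ[ℂ] b) (c ⊗ₜ[ℂ] d)
      = ∑ r ∈ R, (A.circm p (2 - r) a c) ⊗ₜ[ℂ] (B.circm q (1 + r) b d) := by
  classical
  obtain ⟨N₁', hN₁'⟩ := A.trunc a c
  obtain ⟨N₂', hN₂'⟩ := B.trunc b d
  set K₁ : ℕ := N₁'.toNat with hK₁
  set K₂ : ℕ := N₂'.toNat with hK₂
  have hA : ∀ n : ℤ, (K₁:ℤ) ≤ n → A.op n a c = 0 := fun n hn => hN₁' n (by omega)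
  have hB : ∀ n : ℤ, (K₂:ℤ) ≤ n → B.op n b d = 0 := fun n hn => hN₂' n (by omega)
  set I : ℕ := K₁ + K₂ + 2 with hI
  set Jbig : Finset ℤ := Finset.Icc (-2 - (K₂:ℤ)) ((K₁:ℤ) - 1) with hJbig
  set R : Finset ℤ := Finset.Icc (-(K₂:ℤ)) ((K₁:ℤ) + 1) with hR
  refine ⟨R, ?_⟩
  set F : ℕ → ℕ → ℤ → (V₁ ⊗[ℂ] V₂) := Fterm A B p q a c b d with hFdef
  have hFeq : ∀ s t j, F s t j
      = (Ring.choose p s * Ring.choose q t) •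
        (A.op j a c ⊗ₜ[ℂ] B.op ((s:ℤ) + (t:ℤ) - 3 - j) b d) := fun s t j => rfl
  have hF1 : ∀ (s t : ℕ) (j : ℤ), (K₁:ℤ) ≤ j → F s t j = 0 := by
    intro s t j hj
    rw [hFeq, hA j hj, TensorProduct.zero_tmul, smul_zero]
  have hF2 : ∀ (s t : ℕ) (j : ℤ), (K₂:ℤ) ≤ (s:ℤ) + (t:ℤ) - 3 - j → F s t j = 0 := by
    intro s t j hj
    rw [hFeq, hB _ hj, TensorProduct.tmul_zero, smul_zero]
  -- Step 1: rewrite the tensor operator as a finite sum over Jbig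
  have step1 : ∀ i : ℕ, T.op ((i:ℤ) - 2) (a ⊗ₜ[ℂ] b) (c ⊗ₜ[ℂ] d)
      = ∑ j ∈ Jbig, A.op j a c ⊗ₜ[ℂ] B.op ((i:ℤ) - 3 - j) b d := by
    intro i
    rw [hT.1]
    simp only [show ∀ j : ℤ, (i:ℤ) - 2 - 1 - j = (i:ℤ) - 3 - j from fun j => by ring]
    apply finsum_eq_sum_of_support_subset
    intro j hj
    simp only [Function.mem_support] at hj
    simp only [hJbig, Finset.coe_Icc, Set.mem_Icc]
    constructor
    · by_contra h
      push_neg at h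
      exact hj (by rw [hB _ (by omega), TensorProduct.tmul_zero])
    · by_contra h
      push_neg at h
      exact hj (by rw [hA _ (by omega), TensorProduct.zero_tmul])
  -- Step 2: the LHS as a double finite sum
  have step2 : T.circm (p + q) 2 (a ⊗ₜ[ℂ] b) (c ⊗ₜ[ℂ] d)
      = ∑ i ∈ Finset.range I, Ring.choose (p + q) i •
          ∑ j ∈ Jbig, A.op j a c ⊗ₜ[ℂ] B.op ((i:ℤ) - 3 - j) b d := by
    unfold VOA.circm
    rw [finsum_congr (fun i => by rw [step1 i])]
    apply finsum_eq_sum_of_support_subset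
    intro i hi
    simp only [Function.mem_support] at hi
    simp only [Finset.coe_range, Set.mem_Iio]
    by_contra h
    push_neg at h
    apply hi
    rw [Finset.sum_eq_zero, smul_zero]
    intro j hj
    rw [hJbig, Finset.mem_Icc] at hj
    rw [hB ((i:ℤ) - 3 - j) (by omega), TensorProduct.tmul_zero]
  -- Step 3: Vandermonde
  have step3 : T.circm (p + q) 2 (a ⊗ₜ[ℂ] b) (c ⊗ₜ[ℂ] d)
      = ∑ i ∈ Finset.range I, ∑ st ∈ Finset.HasAntidiagonal.antidiagonal i, ∑ j ∈ Jbig, F st.1 st.2 j := by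
    rw [step2]
    refine Finset.sum_congr rfl fun i _ => ?_
    rw [Ring.add_choose_eq i (Commute.all p q), Finset.sum_smul]
    refine Finset.sum_congr rfl fun st hst => ?_
    rw [Finset.smul_sum]
    refine Finset.sum_congr rfl fun j _ => ?_
    rw [Finset.HasAntidiagonal.mem_antidiagonal] at hst
    rw [hFeq, show ((st.1:ℤ) + (st.2:ℤ) - 3 - j) = (i:ℤ) - 3 - j by omega]
  -- Step 4: collapse the triangle
  have step4 : T.circm (p + q) 2 (a ⊗ₜ[ℂ] b) (c ⊗ₜ[ℂ] d)
      = ∑ s ∈ Finset.range I, ∑ t ∈ Finset.range I, ∑ j ∈ Jbig, F s t j := by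
    rw [step3]
    refine sum_triangle_eq I (fun s t => ∑ j ∈ Jbig, F s t j) fun s t hst => ?_
    apply Finset.sum_eq_zero
    intro j hj
    rw [hJbig, Finset.mem_Icc] at hj
    exact hF2 s t j (by omega)
  -- Now the right-hand side
  have stepR : ∑ r ∈ R, (A.circm p (2 - r) a c) ⊗ₜ[ℂ] (B.circm q (1 + r) b d)
      = ∑ s ∈ Finset.range I, ∑ t ∈ Finset.range I, ∑ j ∈ Jbig, F s t j := by
    have e1 : ∀ r ∈ R, (A.circm p (2 - r) a c) ⊗ₜ[ℂ] (B.circm q (1 + r) b d)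
        = ∑ s ∈ Finset.range I, ∑ t ∈ Finset.range I, F s t ((s:ℤ) - 2 + r) := by
      intro r hr
      rw [hR, Finset.mem_Icc] at hr
      rw [A.circm_eq_sum p (2 - r) a c (N := (K₁:ℤ)) (fun n hn => hA n hn) I (by omega),
        B.circm_eq_sum q (1 + r) b d (N := (K₂:ℤ)) (fun n hn => hB n hn) I (by omega)]
      rw [TensorProduct.sum_tmul]
      refine Finset.sum_congr rfl fun s _ => ?_
      rw [TensorProduct.tmul_sum]
      refine Finset.sum_congr rfl fun t _ => ?_
      rw [zsmul_tmul', tmul_zsmul', smul_smul, hFeq,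
        show ((s:ℤ) - (2 - r)) = (s:ℤ) - 2 + r by ring,
        show ((s:ℤ) + (t:ℤ) - 3 - ((s:ℤ) - 2 + r)) = (t:ℤ) - (1 + r) by ring]
    rw [Finset.sum_congr rfl e1]
    rw [Finset.sum_comm]
    refine Finset.sum_congr rfl fun s _ => ?_
    rw [Finset.sum_comm]
    refine Finset.sum_congr rfl fun t _ => ?_
    -- reindex r ↦ s - 2 + r
    have himg : ∑ r ∈ R, F s t ((s:ℤ) - 2 + r)
        = ∑ j ∈ Finset.Icc ((s:ℤ) - 2 + -(K₂:ℤ)) ((s:ℤ) - 2 + ((K₁:ℤ) + 1)), F s t j := by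
      rw [hR, ← Finset.image_add_left_Icc]
      rw [Finset.sum_image (fun x _ y _ h => by omega)]
    rw [himg]
    set J' : Finset ℤ := Finset.Icc ((s:ℤ) - 2 + -(K₂:ℤ)) ((s:ℤ) - 2 + ((K₁:ℤ) + 1)) with hJ'
    have h1 : ∑ j ∈ J', F s t j = ∑ j ∈ J' ∪ Jbig, F s t j := by
      apply Finset.sum_subset Finset.subset_union_left
      intro j _ hj
      rw [hJ', Finset.mem_Icc] at hj
      push_neg at hj
      rcases le_or_gt ((s:ℤ) - 2 + -(K₂:ℤ)) j with hc | hc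
      · exact hF1 s t j (by have := hj hc; omega)
      · exact hF2 s t j (by omega)
    have h2 : ∑ j ∈ Jbig, F s t j = ∑ j ∈ J' ∪ Jbig, F s t j := by
      apply Finset.sum_subset Finset.subset_union_right
      intro j _ hj
      rw [hJbig, Finset.mem_Icc] at hj
      push_neg at hj
      rcases le_or_gt (-2 - (K₂:ℤ)) j with hc | hc
      · exact hF1 s t j (by have := hj hc; omega)
      · exact hF2 s t j (by omega)
    rw [h1, ← h2]
  rw [step4, stepR]

end BigLemma
/-- for the tensor product VOA structure on `V₁ ⊗ V₂`,
`O(V₁ ⊗ V₂) = O(V₁) ⊗ V₂ + V₁ ⊗ O(V₂)`. -/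
theorem Osub_tensorVOA {V₁ V₂ : Type} [AddCommGroup V₁] [Module ℂ V₁]
    [AddCommGroup V₂] [Module ℂ V₂] (A : VOA V₁) (B : VOA V₂)
    (T : VOA (V₁ ⊗[ℂ] V₂)) (hT : IsTensorVOA A B T) :
    T.Osub = tsub A.Osub (⊤ : Submodule ℂ V₂) ⊔ tsub (⊤ : Submodule ℂ V₁) B.Osub := by
  set W := tsub A.Osub (⊤ : Submodule ℂ V₂) ⊔ tsub (⊤ : Submodule ℂ V₁) B.Osub with hW
  apply le_antisymm
  · -- O(V₁ ⊗ V₂) ⊆ O(V₁) ⊗ V₂ + V₁ ⊗ O(V₂)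
    apply Submodule.span_le.2
    rintro x ⟨w, u, v, hu, rfl⟩
    have main : ∀ u' ∈ (⨆ p' : ℤ, tsub (A.grade p') (B.grade (w - p'))),
        ∀ v' : V₁ ⊗[ℂ] V₂, T.circm w 2 u' v' ∈ W := by
      intro u' hu'
      refine Submodule.iSup_induction
        (motive := fun u'' => ∀ v' : V₁ ⊗[ℂ] V₂, T.circm w 2 u'' v' ∈ W) _ hu' ?_ ?_ ?_
      · rintro p' u'' ⟨t, rfl⟩
        induction t using TensorProduct.induction_on with
        | zero =>
          intro v'
          rw [map_zero, T.circm_zero_left]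
          exact zero_mem W
        | tmul x y =>
          rw [TensorProduct.map_tmul]
          intro v'
          induction v' using TensorProduct.induction_on with
          | zero => rw [T.circm_zero_right]; exact zero_mem W
          | tmul c d =>
            obtain ⟨R, hR⟩ := circm_tmul_tmul A B T hT p' (w - p') (↑x) c (↑y) d
            rw [show p' + (w - p') = w by ring] at hR
            simp only [Submodule.coe_subtype]
            rw [hR]
            apply Submodule.sum_mem
            intro r _
            rcases le_or_gt r 0 with hr | hr
            · apply Submodule.mem_sup_left
              exact ⟨⟨A.circm p' (2 - r) (↑x) c,
                  A.circm_mem_Osub (2 - r) (by omega) p' (↑x) c x.2⟩ ⊗ₜ[ℂ]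
                  ⟨B.circm (w - p') (1 + r) (↑y) d, trivial⟩, by simp⟩
            · apply Submodule.mem_sup_right
              exact ⟨⟨A.circm p' (2 - r) (↑x) c, trivial⟩ ⊗ₜ[ℂ]
                  ⟨B.circm (w - p') (1 + r) (↑y) d,
                  B.circm_mem_Osub (1 + r) (by omega) (w - p') (↑y) d y.2⟩, by simp⟩
          | add v₁ v₂ h₁ h₂ =>
            rw [T.circm_add_right]
            exact add_mem h₁ h₂
        | add t₁ t₂ h₁ h₂ =>
          intro v'
          rw [map_add, T.circm_add_left]
          exact add_mem (h₁ v') (h₂ v')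
      · intro v'
        rw [T.circm_zero_left]
        exact zero_mem W
      · intro x y hx hy v'
        rw [T.circm_add_left]
        exact add_mem (hx v') (hy v')
    exact main u (by rw [← hT.2.1 w]; exact hu) v
  · apply sup_le
    · -- O(V₁) ⊗ V₂ ⊆ O(V₁ ⊗ V₂)
      rintro x ⟨t, rfl⟩
      induction t using TensorProduct.induction_on with
      | zero => rw [map_zero]; exact zero_mem _
      | tmul o d =>
        rw [TensorProduct.map_tmul]
        have key : ∀ x : V₁, x ∈ A.Osub → (x ⊗ₜ[ℂ] (d : V₂)) ∈ T.Osub := by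
          intro x hx
          refine Submodule.span_induction ?_ ?_ ?_ ?_ hx
          · rintro y ⟨w, a, c, ha, rfl⟩
            rw [← circm_tmul_vac A B T hT w a c (↑d)]
            apply Submodule.subset_span
            refine ⟨w, a ⊗ₜ[ℂ] B.vacuum, c ⊗ₜ[ℂ] (↑d), ?_, rfl⟩
            rw [hT.2.1 w]
            apply Submodule.mem_iSup_of_mem w
            exact ⟨⟨a, ha⟩ ⊗ₜ[ℂ] ⟨B.vacuum, by rw [sub_self]; exact B.vacuum_grade⟩, by simp⟩
          · rw [TensorProduct.zero_tmul]; exact zero_mem _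
          · intro y z _ _ hy hz
            rw [TensorProduct.add_tmul]; exact add_mem hy hz
          · intro r y _ hy
            rw [← TensorProduct.smul_tmul']; exact Submodule.smul_mem _ _ hy
        exact key (↑o) o.2
      | add t₁ t₂ h₁ h₂ => rw [map_add]; exact add_mem h₁ h₂
    · -- V₁ ⊗ O(V₂) ⊆ O(V₁ ⊗ V₂)
      rintro x ⟨t, rfl⟩
      induction t using TensorProduct.induction_on with
      | zero => rw [map_zero]; exact zero_mem _
      | tmul c o =>
        rw [TensorProduct.map_tmul]
        have key : ∀ y : V₂, y ∈ B.Osub → ((c : V₁) ⊗ₜ[ℂ] y) ∈ T.Osub := by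
          intro y hy
          refine Submodule.span_induction ?_ ?_ ?_ ?_ hy
          · rintro z ⟨w, b, d, hb, rfl⟩
            rw [← circm_vac_tmul A B T hT w b (↑c) d]
            apply Submodule.subset_span
            refine ⟨w, A.vacuum ⊗ₜ[ℂ] b, (↑c) ⊗ₜ[ℂ] d, ?_, rfl⟩
            rw [hT.2.1 w]
            apply Submodule.mem_iSup_of_mem 0
            exact ⟨⟨A.vacuum, A.vacuum_grade⟩ ⊗ₜ[ℂ] ⟨b, by rw [sub_zero]; exact hb⟩, by simp⟩
          · rw [TensorProduct.tmul_zero]; exact zero_mem _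
          · intro y z _ _ hy hz
            rw [TensorProduct.tmul_add]; exact add_mem hy hz
          · intro r y _ hy
            rw [TensorProduct.tmul_smul]; exact Submodule.smul_mem _ _ hy
        exact key (↑o) o.2
      | add t₁ t₂ h₁ h₂ => rw [map_add]; exact add_mem h₁ h₂
end
end
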